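/- (Proposition 3.4, case s = 1.) Assume the Mecke identity with Papangelou intensity r, and assume j : X → [0,∞) is measurable with r(x,γ) ≤ j(x) for all x ∈ X and γ ∈ Γ and ∫_Λ j dν < ∞ for every Λ ∈ B₀(X). Then for every Λ ∈ B₀(X) both functions γ ↦ ∑_{x∈γ∩Λ} 𝟙{r(x,γ\{x})>0} and γ ↦ ∫_Λ r(x,γ) ν(dx) are square-integrable with respect to μ. -/

import Mathlib

open MeasureTheory Set ENNReal Filter Topology

noncomputable section

/-- The configuration space over `X`: the set of all locally finite subsets of `X`. -/
def Config (X : Type*) [TopologicalSpace X] : Type _ :=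
  {γ : Set X // ∀ K : Set X, IsCompact K → (γ ∩ K).Finite}

namespace Config

variable {X : Type*} [TopologicalSpace X]

/-- Removal of a point from a configuration, `γ \ {x}`. -/
def erase (γ : Config X) (x : X) : Config X :=
  ⟨γ.1 \ {x}, fun K hK => (γ.2 K hK).subset fun _ hz => ⟨hz.1.1, hz.2⟩⟩

/-- Insertion of a point into a configuration, `γ ∪ {x}`. -/
def ins (γ : Config X) (x : X) : Config X :=
  ⟨insert x γ.1, fun K hK => ((γ.2 K hK).insert x).subset (by
    rintro z ⟨hz1, hz2⟩
    rcases Set.mem_insert_iff.mp hz1 with rfl | h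
    · exact Set.mem_insert _ _
    · exact Set.mem_insert_of_mem _ ⟨h, hz2⟩)⟩

end Config

variable {X : Type*} [TopologicalSpace X]

/-- Cylinder functions `FC_b`: `F(γ) = g(⟨φ₁,γ⟩, …, ⟨φ_N,γ⟩)` with the `φᵢ` continuous
with compact support and `g` bounded continuous; here `⟨φ,γ⟩ = ∑_{x∈γ} φ(x)`. -/
def IsCylinder (F : Config X → ℝ) : Prop :=
  ∃ (N : ℕ) (φ : Fin N → X → ℝ) (g : (Fin N → ℝ) → ℝ),
    (∀ i, Continuous (φ i)) ∧ (∀ i, HasCompactSupport (φ i)) ∧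
      Continuous g ∧ (∃ C : ℝ, ∀ v, |g v| ≤ C) ∧
      ∀ γ : Config X, F γ = g fun i => ∑' x : γ.1, φ i x

/-- `(D_x^- F)(γ) = F(γ \ {x}) - F(γ)`. -/
def Dm (F : Config X → ℝ) (x : X) (γ : Config X) : ℝ := F (γ.erase x) - F γ

/-- `(D_x^+ F)(γ) = F(γ ∪ {x}) - F(γ)`. -/
def Dp (F : Config X → ℝ) (x : X) (γ : Config X) : ℝ := F (γ.ins x) - F γ

/-- `(D_{xy}^{-+} F)(γ) = F((γ \ {x}) ∪ {y}) - F(γ)`. -/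
def Dpm (F : Config X → ℝ) (x y : X) (γ : Config X) : ℝ := F ((γ.erase x).ins y) - F γ

variable [MeasurableSpace X]

/-- `Λ ∈ B₀(X)`: a relatively compact Borel set. -/
def IsB0 (Λ : Set X) : Prop := MeasurableSet Λ ∧ IsCompact (closure Λ)

/-- The σ-algebra on `Config X` generated by the counting maps `γ ↦ |γ ∩ Λ|`, `Λ ∈ B₀(X)`. -/
instance : MeasurableSpace (Config X) :=
  ⨆ (Λ : Set X) (_ : IsB0 Λ),
    MeasurableSpace.comap (fun γ : Config X => (γ.1 ∩ Λ).ncard) ⊤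

/-- The Mecke identity: `r` is a Papangelou intensity for `μ`, i.e.
`∫ ∑_{x∈γ} H(x,γ) μ(dγ) = ∫ ∫ r(x,γ) H(x,γ∪{x}) ν(dx) μ(dγ)` for measurable `H ≥ 0`. -/
def MeckeIdentity (ν : Measure X) (μ : Measure (Config X)) (r : X → Config X → ℝ) : Prop :=
  ∀ H : X → Config X → ℝ≥0∞, Measurable (fun p : X × Config X => H p.1 p.2) →
    ∫⁻ γ, ∑' x : γ.1, H (x : X) γ ∂μ =
      ∫⁻ γ, ∫⁻ x, ENNReal.ofReal (r x γ) * H x (γ.ins x) ∂ν ∂μ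

/-- Condition (G1): `∫ ∑_{x∈γ∩Λ} d(x,γ\{x}) μ(dγ) < ∞` for every `Λ ∈ B₀(X)`. -/
def CondG1 (μ : Measure (Config X)) (d : X → Config X → ℝ) : Prop :=
  ∀ Λ : Set X, IsB0 Λ →
    ∫⁻ γ, ∑' x : ↥(γ.1 ∩ Λ), ENNReal.ofReal (d (x : X) (γ.erase (x : X))) ∂μ < ⊤

/-- Condition (K1): `∫ ∑_{x∈γ} ∫ c(x,y,γ\{x})(χ_Λ(x)+χ_Λ(y)) ν(dy) μ(dγ) < ∞`
for every `Λ ∈ B₀(X)`. -/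
def CondK1 (ν : Measure X) (μ : Measure (Config X)) (c : X → X → Config X → ℝ) : Prop :=
  ∀ Λ : Set X, IsB0 Λ →
    ∫⁻ γ, ∑' x : γ.1, ∫⁻ y,
        ENNReal.ofReal (c (x : X) y (γ.erase (x : X))) *
          (Λ.indicator (1 : X → ℝ≥0∞) (x : X) + Λ.indicator (1 : X → ℝ≥0∞) y) ∂ν ∂μ < ⊤

/-- The Glauber Dirichlet form `ℰ_G(F,G)`. -/
def glauberE (μ : Measure (Config X)) (d : X → Config X → ℝ) (F G : Config X → ℝ) : ℝ :=
  ∫ γ, (∑' x : γ.1, d (x : X) (γ.erase (x : X)) * Dm F (x : X) γ * Dm G (x : X) γ) ∂μ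

/-- The Kawasaki Dirichlet form `ℰ_K(F,G)`. -/
def kawasakiE (ν : Measure X) (μ : Measure (Config X)) (c : X → X → Config X → ℝ)
    (F G : Config X → ℝ) : ℝ :=
  ∫ γ, (∑' x : γ.1, ∫ y, c (x : X) y (γ.erase (x : X)) * Dpm F (x : X) y γ *
    Dpm G (x : X) y γ ∂ν) ∂μ

/-!
Write `N_Λ(γ) = |γ ∩ Λ|` and `C = ∫_Λ j dν < ∞`. Applied to `H(x, γ) = 𝟙_Λ(x) f(γ)`, the Mecke
identity reads `E[N_Λ f] = E ∫_Λ r(x, γ) f(γ ∪ {x}) ν(dx)`. With `f = 1` and `r ≤ j` this gives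
`E[N_Λ] ≤ C`; with `f = N_Λ` and `N_Λ(γ ∪ {x}) ≤ N_Λ(γ) + 1` it gives `E[N_Λ²] ≤ C (C + 1)`.
The first function is dominated by `N_Λ`, and the second one by the constant `C`.
-/

namespace Config

variable {X : Type*} [TopologicalSpace X] {Λ : Set X}

theorem finite_inter_of_isCompact_closure (γ : Config X) (hΛ : IsCompact (closure Λ)) :
    (γ.1 ∩ Λ).Finite :=
  (γ.2 _ hΛ).subset (inter_subset_inter_right _ subset_closure)

theorem tsum_inter_one_eq_ncard (γ : Config X) (hΛ : IsCompact (closure Λ)) :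
    ∑' _ : ↥(γ.1 ∩ Λ), (1 : ℝ≥0∞) = (γ.1 ∩ Λ).ncard := by
  rw [ENNReal.tsum_set_one, ← (γ.finite_inter_of_isCompact_closure hΛ).cast_ncard_eq,
    ENat.toENNReal_coe]

theorem tsum_indicator_one_eq_ncard (γ : Config X) (hΛ : IsCompact (closure Λ)) :
    ∑' x : γ.1, Λ.indicator (1 : X → ℝ≥0∞) x = (γ.1 ∩ Λ).ncard := by
  rw [tsum_subtype, indicator_indicator, ← tsum_subtype]
  exact γ.tsum_inter_one_eq_ncard hΛ

theorem tsum_inter_le_ncard (γ : Config X) (hΛ : IsCompact (closure Λ))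
    {f : ↥(γ.1 ∩ Λ) → ℝ≥0∞} (hf : ∀ x, f x ≤ 1) : ∑' x, f x ≤ (γ.1 ∩ Λ).ncard :=
  (ENNReal.tsum_le_tsum hf).trans_eq (γ.tsum_inter_one_eq_ncard hΛ)

theorem ncard_ins_inter_le (γ : Config X) (x : X) (hΛ : IsCompact (closure Λ)) :
    ((γ.ins x).1 ∩ Λ).ncard ≤ (γ.1 ∩ Λ).ncard + 1 :=
  calc ((γ.ins x).1 ∩ Λ).ncard ≤ (insert x (γ.1 ∩ Λ)).ncard :=
        ncard_le_ncard
          (insert_inter_distrib x γ.1 Λ ▸ inter_subset_inter_right _ (subset_insert _ _))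
          ((γ.finite_inter_of_isCompact_closure hΛ).insert x)
    _ ≤ (γ.1 ∩ Λ).ncard + 1 := ncard_insert_le _ _

variable [MeasurableSpace X]

theorem measurable_ncard_inter (hΛ : IsB0 Λ) : Measurable fun γ : Config X => (γ.1 ∩ Λ).ncard :=
  measurable_iff_comap_le.2 <| le_iSup₂ (f := fun (Λ : Set X) (_ : IsB0 Λ) =>
    MeasurableSpace.comap (fun γ : Config X => (γ.1 ∩ Λ).ncard) ⊤) Λ hΛ

end Config

namespace MeckeIdentity

variable {X : Type*} [TopologicalSpace X] [MeasurableSpace X] {ν : Measure X}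
  {μ : Measure (Config X)} {r : X → Config X → ℝ} {Λ : Set X}

theorem lintegral_ncard_inter_mul (hMecke : MeckeIdentity ν μ r) (hΛ : IsB0 Λ)
    {f : Config X → ℝ≥0∞} (hf : Measurable f) :
    ∫⁻ γ, (γ.1 ∩ Λ).ncard * f γ ∂μ =
      ∫⁻ γ, ∫⁻ x in Λ, ENNReal.ofReal (r x γ) * f (γ.ins x) ∂ν ∂μ := by
  have hH : Measurable fun p : X × Config X => Λ.indicator (1 : X → ℝ≥0∞) p.1 * f p.2 :=
    ((measurable_one.indicator hΛ.1).comp measurable_fst).mul (hf.comp measurable_snd)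
  calc ∫⁻ γ, (γ.1 ∩ Λ).ncard * f γ ∂μ
      = ∫⁻ γ, ∑' x : γ.1, Λ.indicator 1 (x : X) * f γ ∂μ := lintegral_congr fun γ => by
        rw [ENNReal.tsum_mul_right, γ.tsum_indicator_one_eq_ncard hΛ.2]
    _ = ∫⁻ γ, ∫⁻ x, ENNReal.ofReal (r x γ) * (Λ.indicator 1 x * f (γ.ins x)) ∂ν ∂μ :=
        hMecke (fun x γ => Λ.indicator 1 x * f γ) hH
    _ = _ := lintegral_congr fun γ => by
        rw [← lintegral_indicator hΛ.1]
        congr 1 with x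
        by_cases hx : x ∈ Λ <;> simp [hx]

theorem lintegral_ncard_inter_le [IsProbabilityMeasure μ] (hMecke : MeckeIdentity ν μ r)
    (hΛ : IsB0 Λ) {j : X → ℝ} (hrj : ∀ x γ, r x γ ≤ j x) :
    ∫⁻ γ, (γ.1 ∩ Λ).ncard ∂μ ≤ ∫⁻ x in Λ, ENNReal.ofReal (j x) ∂ν :=
  calc ∫⁻ γ, (γ.1 ∩ Λ).ncard ∂μ = ∫⁻ γ, (γ.1 ∩ Λ).ncard * 1 ∂μ := by simp only [mul_one]
    _ = ∫⁻ γ, ∫⁻ x in Λ, ENNReal.ofReal (r x γ) * 1 ∂ν ∂μ :=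
        hMecke.lintegral_ncard_inter_mul hΛ measurable_const
    _ ≤ ∫⁻ _, ∫⁻ x in Λ, ENNReal.ofReal (j x) ∂ν ∂μ := lintegral_mono fun γ =>
        lintegral_mono fun x => by simpa only [mul_one] using ENNReal.ofReal_le_ofReal (hrj x γ)
    _ = ∫⁻ x in Λ, ENNReal.ofReal (j x) ∂ν := by simp

theorem lintegral_ncard_inter_sq_le [IsProbabilityMeasure μ] (hMecke : MeckeIdentity ν μ r)
    (hΛ : IsB0 Λ) {j : X → ℝ} (hrj : ∀ x γ, r x γ ≤ j x) :
    ∫⁻ γ, ((γ.1 ∩ Λ).ncard : ℝ≥0∞) ^ 2 ∂μ ≤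
      (∫⁻ x in Λ, ENNReal.ofReal (j x) ∂ν) * ((∫⁻ x in Λ, ENNReal.ofReal (j x) ∂ν) + 1) := by
  set C := ∫⁻ x in Λ, ENNReal.ofReal (j x) ∂ν
  have hN : Measurable fun γ : Config X => ((γ.1 ∩ Λ).ncard : ℝ≥0∞) :=
    measurable_from_top.comp (Config.measurable_ncard_inter hΛ)
  calc ∫⁻ γ, ((γ.1 ∩ Λ).ncard : ℝ≥0∞) ^ 2 ∂μ
      = ∫⁻ γ, (γ.1 ∩ Λ).ncard * (γ.1 ∩ Λ).ncard ∂μ := by simp only [sq]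
    _ = ∫⁻ γ, ∫⁻ x in Λ, ENNReal.ofReal (r x γ) * ((γ.ins x).1 ∩ Λ).ncard ∂ν ∂μ :=
        hMecke.lintegral_ncard_inter_mul hΛ hN
    _ ≤ ∫⁻ γ, ∫⁻ x in Λ, ENNReal.ofReal (j x) * ((γ.1 ∩ Λ).ncard + 1) ∂ν ∂μ :=
        lintegral_mono fun γ => lintegral_mono fun x =>
          mul_le_mul' (ENNReal.ofReal_le_ofReal (hrj x γ))
            (by exact_mod_cast γ.ncard_ins_inter_le x hΛ.2)
    _ = ∫⁻ γ, C * ((γ.1 ∩ Λ).ncard + 1) ∂μ := lintegral_congr fun γ =>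
        lintegral_mul_const' _ _ (by finiteness)
    _ = C * (∫⁻ γ, (γ.1 ∩ Λ).ncard ∂μ + 1) := by
        rw [lintegral_const_mul _ (hN.add_const 1), lintegral_add_right _ measurable_const]
        simp
    _ ≤ C * (C + 1) := by gcongr; exact hMecke.lintegral_ncard_inter_le hΛ hrj

end MeckeIdentity

theorem example_death_rate_square_integrable_general {X : Type*} [TopologicalSpace X]
    [MeasurableSpace X]
    (ν : Measure X)
    (μ : Measure (Config X)) [IsProbabilityMeasure μ]
    (r : X → Config X → ℝ)
    (hMecke : MeckeIdentity ν μ r)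
    (j : X → ℝ)
    (hrj : ∀ x γ, r x γ ≤ j x)
    (hjint : ∀ Λ : Set X, IsB0 Λ → ∫⁻ x in Λ, ENNReal.ofReal (j x) ∂ν < ⊤) :
    ∀ Λ : Set X, IsB0 Λ →
      (∫⁻ γ, (∑' x : ↥(γ.1 ∩ Λ),
          (if 0 < r (x : X) (γ.erase (x : X)) then (1 : ℝ≥0∞) else 0)) ^ 2 ∂μ < ⊤) ∧
        ∫⁻ γ, (∫⁻ x in Λ, ENNReal.ofReal (r x γ) ∂ν) ^ 2 ∂μ < ⊤ := by
  intro Λ hΛ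
  have hC := hjint Λ hΛ
  constructor
  · calc _ ≤ ∫⁻ γ, ((γ.1 ∩ Λ).ncard : ℝ≥0∞) ^ 2 ∂μ := lintegral_mono fun γ =>
          pow_le_pow_left₀ zero_le (γ.tsum_inter_le_ncard hΛ.2 fun _ => by split_ifs <;> simp) 2
      _ ≤ _ := hMecke.lintegral_ncard_inter_sq_le hΛ hrj
      _ < ⊤ := by finiteness
  · calc _ ≤ ∫⁻ _, (∫⁻ x in Λ, ENNReal.ofReal (j x) ∂ν) ^ 2 ∂μ := lintegral_mono fun γ =>
          pow_le_pow_left₀ zero_le (lintegral_mono fun x => ENNReal.ofReal_le_ofReal (hrj x γ)) 2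
      _ < ⊤ := by simpa using hC

/-- Proposition 3.4, case `s = 1`: both `γ ↦ ∑_{x∈γ∩Λ} 𝟙{r(x,γ\{x})>0}` and
`γ ↦ ∫_Λ r(x,γ) ν(dx)` are square-integrable with respect to `μ` for every
`Λ ∈ B₀(X)`. -/
theorem example_death_rate_square_integrable {X : Type*} [TopologicalSpace X]
    [LocallyCompactSpace X] [SecondCountableTopology X] [T2Space X]
    [MeasurableSpace X] [BorelSpace X]
    (ν : Measure X) [ν.Regular] [NullSingletonClass ν]
    (μ : Measure (Config X)) [IsProbabilityMeasure μ]
    (r : X → Config X → ℝ) (hr0 : ∀ x γ, 0 ≤ r x γ)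
    (hrm : Measurable fun p : X × Config X => r p.1 p.2)
    (hMecke : MeckeIdentity ν μ r)
    (j : X → ℝ) (hj0 : ∀ x, 0 ≤ j x) (hjm : Measurable j)
    (hrj : ∀ x γ, r x γ ≤ j x)
    (hjint : ∀ Λ : Set X, IsB0 Λ → ∫⁻ x in Λ, ENNReal.ofReal (j x) ∂ν < ⊤) :
    ∀ Λ : Set X, IsB0 Λ →
      (∫⁻ γ, (∑' x : ↥(γ.1 ∩ Λ),
          (if 0 < r (x : X) (γ.erase (x : X)) then (1 : ℝ≥0∞) else 0)) ^ 2 ∂μ < ⊤) ∧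
        ∫⁻ γ, (∫⁻ x in Λ, ENNReal.ofReal (r x γ) ∂ν) ^ 2 ∂μ < ⊤ :=
  example_death_rate_square_integrable_general ν μ r hMecke j hrj hjint
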